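/- Let η > 0. Over all copulae C linking two standard normal random variables X and Y, the supremum of P_C(X − Y ≥ η) equals 2Φ(−η/2), and this supremum is attained by the copula C^r defined with r = 2Φ(−η/2) by C^r(u,v) = min(u−1+r, v) on [1−r,1]×[0,r] and C^r(u,v) = max(u+v−1, 0) elsewhere on [0,1]². -/

import Mathlib

open MeasureTheory ProbabilityTheory Real Set

/-- Standard normal cumulative distribution function. -/
noncomputable def Phi (x : ℝ) : ℝ := ((gaussianReal 0 1) (Set.Iic x)).toReal

/-- Generalized inverse (quantile function) of the standard normal CDF. -/
noncomputable def PhiInv (u : ℝ) : ℝ := sInf {x : ℝ | u ≤ Phi x}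

/-- Standard normal density. -/
noncomputable def phiDens (u : ℝ) : ℝ := Real.exp (-u ^ 2 / 2) / Real.sqrt (2 * Real.pi)

/-- Law of a bivariate standard Gaussian vector with correlation ρ. -/
noncomputable def stdGauss2 (ρ : ℝ) : Measure (ℝ × ℝ) :=
  ((gaussianReal 0 1).prod (gaussianReal 0 1)).map
    (fun p => (p.1, ρ * p.1 + Real.sqrt (1 - ρ ^ 2) * p.2))

/-- Bivariate standard normal CDF with correlation ρ. -/
noncomputable def Phi2 (ρ x y : ℝ) : ℝ := ((stdGauss2 ρ) (Set.Iic x ×ˢ Set.Iic y)).toReal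

/-- `B` is a standard Brownian motion (started at `0`) under `P`. -/
structure IsStandardBM {Ω : Type} [MeasurableSpace Ω] (P : Measure Ω) (B : ℝ → Ω → ℝ) : Prop where
  meas : ∀ t : ℝ, Measurable (B t)
  cont : ∀ ω, Continuous fun t => B t ω
  init : ∀ ω, B 0 ω = 0
  gauss : ∀ s t : ℝ, 0 ≤ s → ∀ hst : s ≤ t,
    P.map (fun ω => B t ω - B s ω) = gaussianReal 0 ⟨t - s, sub_nonneg.mpr hst⟩
  indep : ∀ (n : ℕ) (ts : Fin (n + 1) → ℝ), Monotone ts → (∀ i, 0 ≤ ts i) →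
    iIndepFun
      (fun i : Fin n => fun ω => B (ts i.succ) ω - B (ts i.castSucc) ω) P

/-- `C` is a (bivariate) copula. -/
def IsCopula (C : ℝ → ℝ → ℝ) : Prop :=
  (∀ u₁ u₂ v₁ v₂ : ℝ, 0 ≤ u₁ → u₁ ≤ u₂ → u₂ ≤ 1 → 0 ≤ v₁ → v₁ ≤ v₂ → v₂ ≤ 1 →
    0 ≤ C u₂ v₂ - C u₁ v₂ - C u₂ v₁ + C u₁ v₁) ∧
  (∀ u : ℝ, 0 ≤ u → u ≤ 1 → C u 0 = 0 ∧ C 0 u = 0 ∧ C u 1 = u ∧ C 1 u = u)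

/-- The patchwork (shuffle-of-M) copula `C^r`. -/
noncomputable def Cr (r u v : ℝ) : ℝ :=
  if 1 - r ≤ u ∧ v ≤ r then min (u - 1 + r) v else max (u + v - 1) 0


lemma Phi_eq_integral (x : ℝ) : Phi x = ∫ t in Set.Iic x, gaussianPDFReal 0 1 t := by
  rw [Phi, gaussianReal_apply_eq_integral 0 one_ne_zero,
    ENNReal.toReal_ofReal (integral_nonneg fun t => gaussianPDFReal_nonneg 0 1 t)]

lemma Phi_sub_eq (a b : ℝ) : Phi b - Phi a = ∫ t in a..b, gaussianPDFReal 0 1 t := by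
  rw [Phi_eq_integral, Phi_eq_integral]
  exact intervalIntegral.integral_Iic_sub_Iic ((integrable_gaussianPDFReal 0 1).integrableOn)
    ((integrable_gaussianPDFReal 0 1).integrableOn)

lemma intInt_gauss (a b : ℝ) : IntervalIntegrable (gaussianPDFReal 0 1) volume a b :=
  (integrable_gaussianPDFReal 0 1).intervalIntegrable

lemma Phi_mono : StrictMono Phi := by
  intro a b hab
  have h := Phi_sub_eq a b
  have : 0 < ∫ t in a..b, gaussianPDFReal 0 1 t :=
    intervalIntegral.intervalIntegral_pos_of_pos (intInt_gauss a b)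
      (fun t => gaussianPDFReal_pos 0 1 t one_ne_zero) hab
  linarith

lemma Phi_monotone : Monotone Phi := Phi_mono.monotone

lemma Phi_continuous : Continuous Phi := by
  have : Continuous fun x => Phi 0 + ∫ t in (0:ℝ)..x, gaussianPDFReal 0 1 t :=
    continuous_const.add (intervalIntegral.continuous_primitive (fun a b => intInt_gauss a b) 0)
  convert this using 2 with x
  linarith [Phi_sub_eq 0 x]

lemma Phi_nonneg (x : ℝ) : 0 ≤ Phi x := ENNReal.toReal_nonneg

lemma Phi_le_one (x : ℝ) : Phi x ≤ 1 := by
  rw [Phi]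
  have h : (gaussianReal 0 1) (Set.Iic x) ≤ 1 := prob_le_one
  exact ENNReal.toReal_le_of_le_ofReal one_pos.le (by simpa using h)

lemma Phi_lt_one (x : ℝ) : Phi x < 1 := lt_of_lt_of_le (Phi_mono (lt_add_one x)) (Phi_le_one _)
lemma Phi_pos (x : ℝ) : 0 < Phi x := lt_of_le_of_lt (Phi_nonneg (x-1)) (Phi_mono (by linarith))

lemma gaussEven (t : ℝ) : gaussianPDFReal 0 1 (-t) = gaussianPDFReal 0 1 t := by
  simp [gaussianPDFReal, neg_sq]

lemma Phi_neg (x : ℝ) : Phi (-x) = 1 - Phi x := by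
  have h1 : Phi (-x) = ∫ t in Set.Ioi x, gaussianPDFReal 0 1 t := by
    rw [Phi_eq_integral, ← integral_comp_neg_Ioi]
    exact setIntegral_congr_fun (measurableSet_Ioi) (fun t _ => (gaussEven t).symm) |>.symm
  have h2 : Phi x + ∫ t in Set.Ioi x, gaussianPDFReal 0 1 t = 1 := by
    rw [Phi_eq_integral]
    have := integral_add_compl (measurableSet_Iic (a := x)) (integrable_gaussianPDFReal 0 1)
    rw [integral_gaussianPDFReal_eq_one 0 one_ne_zero, Set.compl_Iic] at this
    exact this
  linarith

lemma Phi_tendsto_atTop : Filter.Tendsto Phi Filter.atTop (nhds 1) := by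
  have h : Filter.Tendsto (fun x => (gaussianReal 0 1) (Set.Iic x)) Filter.atTop (nhds 1) := by
    simpa using tendsto_measure_Iic_atTop (μ := gaussianReal 0 1)
  have := (ENNReal.tendsto_toReal (by norm_num)).comp h
  simp only [Function.comp_def, ENNReal.toReal_one] at this
  exact this

lemma Phi_tendsto_atBot : Filter.Tendsto Phi Filter.atBot (nhds 0) := by
  have h : Filter.Tendsto (fun x => 1 - Phi (-x)) Filter.atBot (nhds 0) := by
    have := Phi_tendsto_atTop.comp (Filter.tendsto_neg_atBot_atTop)
    have h2 := (tendsto_const_nhds (x := (1:ℝ)) (f := Filter.atBot)).sub this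
    simpa using h2
  refine h.congr fun x => by rw [← Phi_neg, neg_neg]

lemma Phi_zero : Phi 0 = 1/2 := by have := Phi_neg 0; rw [neg_zero] at this; linarith

lemma exists_Phi_lt {u : ℝ} (hu : 0 < u) : ∃ a, Phi a < u :=
  (Phi_tendsto_atBot.eventually_lt_const hu).exists

lemma exists_le_Phi {u : ℝ} (hu : u < 1) : ∃ b, u ≤ Phi b := by
  obtain ⟨b, hb⟩ := (Phi_tendsto_atTop.eventually_const_lt hu).exists
  exact ⟨b, hb.le⟩

lemma SPhi_nonempty {u : ℝ} (hu : u < 1) : {x : ℝ | u ≤ Phi x}.Nonempty := exists_le_Phi hu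

lemma SPhi_bddBelow {u : ℝ} (hu : 0 < u) : BddBelow {x : ℝ | u ≤ Phi x} := by
  obtain ⟨a, ha⟩ := exists_Phi_lt hu
  exact ⟨a, fun x hx => by by_contra h; push_neg at h
                           exact absurd (lt_of_le_of_lt hx (by exact lt_of_le_of_lt (Phi_monotone h.le) ha)) (lt_irrefl u)⟩

lemma SPhi_closed (u : ℝ) : IsClosed {x : ℝ | u ≤ Phi x} :=
  isClosed_le continuous_const Phi_continuous

lemma PhiInv_mem {u : ℝ} (hu : 0 < u) (hu1 : u < 1) : u ≤ Phi (PhiInv u) :=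
  (SPhi_closed u).csInf_mem (SPhi_nonempty hu1) (SPhi_bddBelow hu)

lemma Phi_PhiInv {u : ℝ} (hu : 0 < u) (hu1 : u < 1) : Phi (PhiInv u) = u := by
  obtain ⟨a, ha⟩ := exists_Phi_lt hu
  obtain ⟨b, hb⟩ := exists_le_Phi hu1
  have hab : a ≤ b := by
    by_contra h; push_neg at h
    exact absurd (lt_of_le_of_lt hb (lt_of_le_of_lt (Phi_monotone h.le) ha)) (lt_irrefl u)
  obtain ⟨x, -, hx⟩ := intermediate_value_Icc hab Phi_continuous.continuousOn ⟨ha.le, hb⟩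
  have h1 : PhiInv u ≤ x := csInf_le (SPhi_bddBelow hu) (by simp [hx])
  exact le_antisymm (le_of_le_of_eq (Phi_monotone h1) hx) (PhiInv_mem hu hu1)

lemma PhiInv_le_iff {u y : ℝ} (hu : 0 < u) (hu1 : u < 1) : PhiInv u ≤ y ↔ u ≤ Phi y := by
  constructor
  · intro h; exact le_trans (PhiInv_mem hu hu1) (Phi_monotone h)
  · intro h; exact csInf_le (SPhi_bddBelow hu) h

lemma PhiInv_of_nonpos {u : ℝ} (hu : u ≤ 0) : PhiInv u = 0 := by
  have : {x : ℝ | u ≤ Phi x} = univ := eq_univ_of_forall fun x => le_trans hu (Phi_nonneg x)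
  rw [PhiInv, this]
  exact Real.sInf_of_not_bddBelow fun ⟨a, ha⟩ => by
    obtain ⟨c, hc⟩ := exists_lt a
    exact absurd (ha (mem_univ c)) (not_le.mpr hc)

lemma PhiInv_of_one_le {u : ℝ} (hu : 1 ≤ u) : PhiInv u = 0 := by
  have : {x : ℝ | u ≤ Phi x} = ∅ :=
    eq_empty_of_forall_notMem fun x hx => absurd (lt_of_lt_of_le (Phi_lt_one x) hu) (not_lt.mpr hx)
  rw [PhiInv, this, Real.sInf_empty]

lemma measurable_PhiInv : Measurable PhiInv := by
  apply measurable_of_Iic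
  intro y
  by_cases hy : 0 ≤ y
  · have : PhiInv ⁻¹' Iic y = (Ioo 0 1 ∩ Iic (Phi y)) ∪ (Ioo (0:ℝ) 1)ᶜ := by
      ext u
      simp only [mem_preimage, mem_Iic, mem_union, mem_inter_iff, mem_Ioo, mem_compl_iff, not_and, not_lt]
      constructor
      · intro h
        by_cases h0 : 0 < u
        · by_cases h1 : u < 1
          · exact Or.inl ⟨⟨h0, h1⟩, (PhiInv_le_iff h0 h1).mp h⟩
          · exact Or.inr fun _ => not_lt.mp h1
        · exact Or.inr fun hc => absurd hc h0
      · rintro (⟨⟨h0, h1⟩, h⟩ | h)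
        · exact (PhiInv_le_iff h0 h1).mpr h
        · rcases lt_or_ge 0 u with h0 | h0
          · rw [PhiInv_of_one_le (h h0)]; exact hy
          · rw [PhiInv_of_nonpos h0]; exact hy
    rw [this]
    exact ((measurableSet_Ioo.inter measurableSet_Iic).union measurableSet_Ioo.compl)
  · have : PhiInv ⁻¹' Iic y = Ioo 0 1 ∩ Iic (Phi y) := by
      ext u
      simp only [mem_preimage, mem_Iic, mem_inter_iff, mem_Ioo]
      constructor
      · intro h
        by_cases h0 : 0 < u
        · by_cases h1 : u < 1
          · exact ⟨⟨h0, h1⟩, (PhiInv_le_iff h0 h1).mp h⟩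
          · rw [PhiInv_of_one_le (not_lt.mp h1)] at h; exact absurd h hy
        · rw [PhiInv_of_nonpos (not_lt.mp h0)] at h; exact absurd h hy
      · rintro ⟨⟨h0, h1⟩, h⟩
        exact (PhiInv_le_iff h0 h1).mpr h
    rw [this]
    exact measurableSet_Ioo.inter measurableSet_Iic

lemma gauss_le_gauss {s t : ℝ} (h : s^2 ≤ t^2) : gaussianPDFReal 0 1 t ≤ gaussianPDFReal 0 1 s := by
  rw [gaussianPDFReal, gaussianPDFReal]
  refine mul_le_mul_of_nonneg_left (exp_le_exp.mpr ?_) (by positivity)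
  rw [NNReal.coe_one]
  nlinarith

lemma key_ineq {η : ℝ} (hη : 0 ≤ η) (x : ℝ) : 2 * Phi (-η/2) ≤ Phi (-x) + Phi (x - η) := by
  have heq : η/2 - η = -η/2 := by ring
  have heq2 : -(η/2) = -η/2 := by ring
  have hdiff : ∀ y : ℝ, Phi (-y) + Phi (y - η) - 2 * Phi (-η/2)
      = ∫ t in (η/2)..y, (gaussianPDFReal 0 1 (t - η) - gaussianPDFReal 0 1 t) := by
    intro y
    rw [intervalIntegral.integral_sub
      (((integrable_gaussianPDFReal 0 1).comp_sub_right η).intervalIntegrable)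
      (intInt_gauss _ _)]
    have h1 : (∫ t in (η/2)..y, gaussianPDFReal 0 1 (t - η)) = Phi (y - η) - Phi (-η/2) := by
      rw [intervalIntegral.integral_comp_sub_right (fun t => gaussianPDFReal 0 1 t) η,
        ← Phi_sub_eq, heq]
    have h2 : (∫ t in (η/2)..y, gaussianPDFReal 0 1 t) = Phi (-η/2) - Phi (-y) := by
      have h3 : (∫ t in (η/2)..y, gaussianPDFReal 0 1 t)
          = ∫ t in (η/2)..y, gaussianPDFReal 0 1 (-t) :=
        intervalIntegral.integral_congr (fun t _ => (gaussEven t).symm)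
      rw [h3, intervalIntegral.integral_comp_neg (fun t => gaussianPDFReal 0 1 t),
        ← Phi_sub_eq, heq2]
    rw [h1, h2]; ring
  have hint : ∀ t : ℝ, η/2 ≤ t →
      0 ≤ gaussianPDFReal 0 1 (t - η) - gaussianPDFReal 0 1 t := by
    intro t ht
    have h2 : (t-η)^2 ≤ t^2 := by nlinarith
    linarith [gauss_le_gauss (s := t - η) (t := t) h2]
  have hint2 : ∀ t : ℝ, t ≤ η/2 →
      gaussianPDFReal 0 1 (t - η) - gaussianPDFReal 0 1 t ≤ 0 := by
    intro t ht
    have h2 : t^2 ≤ (t-η)^2 := by nlinarith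
    linarith [gauss_le_gauss (s := t) (t := t - η) h2]
  rcases le_total (η/2) x with hx | hx
  · have h : 0 ≤ ∫ t in (η/2)..x, (gaussianPDFReal 0 1 (t - η) - gaussianPDFReal 0 1 t) :=
      intervalIntegral.integral_nonneg hx (fun t ht => hint t ht.1)
    linarith [hdiff x]
  · have h : 0 ≤ ∫ t in x..(η/2), (gaussianPDFReal 0 1 t - gaussianPDFReal 0 1 (t - η)) :=
      intervalIntegral.integral_nonneg hx (fun t ht => by linarith [hint2 t ht.2])
    have hneg : (∫ t in x..(η/2), (gaussianPDFReal 0 1 t - gaussianPDFReal 0 1 (t - η)))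
        = -∫ t in x..(η/2), (gaussianPDFReal 0 1 (t - η) - gaussianPDFReal 0 1 t) := by
      rw [← intervalIntegral.integral_neg]
      congr 1
      ext t
      ring
    have hs : (∫ t in (η/2)..x, (gaussianPDFReal 0 1 (t - η) - gaussianPDFReal 0 1 t))
        = -∫ t in x..(η/2), (gaussianPDFReal 0 1 (t - η) - gaussianPDFReal 0 1 t) :=
      _root_.intervalIntegral.integral_symm x (η/2)
    linarith [hdiff x, h, hs, hneg]

lemma PhiInv_unique {u x : ℝ} (hu : 0 < u) (hu1 : u < 1) (h : Phi x = u) : PhiInv u = x :=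
  Phi_mono.injective (by rw [Phi_PhiInv hu hu1, h])

lemma PhiInv_one_sub {t : ℝ} (ht : 0 < t) (ht1 : t < 1) : PhiInv (1 - t) = -PhiInv t := by
  refine PhiInv_unique (by linarith) (by linarith) ?_
  rw [Phi_neg, Phi_PhiInv ht ht1]

lemma le_PhiInv_iff {u y : ℝ} (hu : 0 < u) (hu1 : u < 1) : y ≤ PhiInv u ↔ Phi y ≤ u := by
  constructor
  · intro h
    calc Phi y ≤ Phi (PhiInv u) := Phi_monotone h
      _ = u := Phi_PhiInv hu hu1
  · intro h
    exact Phi_mono.le_iff_le.mp (by rw [Phi_PhiInv hu hu1]; exact h)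

lemma diff_ge {η x y : ℝ} (hη : 0 ≤ η) (h : 1 - 2 * Phi (-η/2) ≤ Phi x - Phi y) :
    η ≤ x - y := by
  have hk := key_ineq hη x
  have h2 : Phi (-x) = 1 - Phi x := Phi_neg x
  have h3 : Phi y ≤ Phi (x - η) := by linarith
  have h4 : y ≤ x - η := Phi_mono.le_iff_le.mp h3
  linarith

-- Copula Lipschitz-type bounds
lemma copula_bounds {C : ℝ → ℝ → ℝ} (hC : IsCopula C) {u v : ℝ}
    (hu : 0 ≤ u) (hu1 : u ≤ 1) (hv : 0 ≤ v) (hv1 : v ≤ 1) :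
    u - (1 - v) ≤ C u v ∧ C u v ≤ u := by
  obtain ⟨hrect, hbdry⟩ := hC
  have h1 := hrect u 1 v 1 hu hu1 le_rfl hv hv1 le_rfl
  have h2 := hrect 0 u v 1 le_rfl hu hu1 hv hv1 le_rfl
  obtain ⟨-, -, hu1', -⟩ := hbdry u hu hu1
  obtain ⟨-, h0v, -, hv1'⟩ := hbdry v hv hv1
  obtain ⟨-, h01, h11, h1v⟩ := hbdry 1 zero_le_one le_rfl
  constructor <;> linarith

lemma copula_bounds2 {C : ℝ → ℝ → ℝ} (hC : IsCopula C) {v u : ℝ}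
    (hv : 0 ≤ v) (hv1 : v ≤ 1) (hu : 0 ≤ u) (hu1 : u ≤ 1) :
    v - (1 - u) ≤ C u v ∧ C u v ≤ v := by
  obtain ⟨hrect, hbdry⟩ := hC
  have h1 := hrect u 1 v 1 hu hu1 le_rfl hv hv1 le_rfl
  have h2 := hrect u 1 0 v hu hu1 le_rfl le_rfl hv hv1
  obtain ⟨hu0, -, hu1', -⟩ := hbdry u hu hu1
  obtain ⟨-, -, -, hv1'⟩ := hbdry v hv hv1
  obtain ⟨-, -, h11, h1v⟩ := hbdry 1 zero_le_one le_rfl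
  obtain ⟨-, -, -, h10⟩ := hbdry 0 le_rfl zero_le_one
  constructor <;> linarith

lemma part1 (η : ℝ) (hη : 0 < η) (C : ℝ → ℝ → ℝ) (μ : Measure (ℝ × ℝ))
    (hC : IsCopula C) (hμ : IsProbabilityMeasure μ)
    (hcdf : ∀ x y : ℝ, (μ (Set.Iic x ×ˢ Set.Iic y)).toReal = C (Phi x) (Phi y)) :
    (μ {q : ℝ × ℝ | η ≤ q.1 - q.2}).toReal ≤ 2 * Phi (-η / 2) := by
  -- marginals
  have hm1 : ∀ x : ℝ, (μ (Set.Iic x ×ˢ (univ : Set ℝ))).toReal = Phi x := by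
    intro x
    have hun : (⋃ n : ℕ, Set.Iic x ×ˢ Set.Iic (n : ℝ)) = Set.Iic x ×ˢ (univ : Set ℝ) := by
      ext q
      simp only [mem_iUnion, mem_prod, mem_Iic, mem_univ, and_true]
      constructor
      · rintro ⟨n, h1, -⟩; exact h1
      · intro h; obtain ⟨n, hn⟩ := exists_nat_ge q.2; exact ⟨n, h, hn⟩
    have hmono : Monotone fun n : ℕ => Set.Iic x ×ˢ Set.Iic (n : ℝ) := by
      intro m n hmn
      exact prod_mono_right (Iic_subset_Iic.mpr (by exact_mod_cast hmn))
    have htend := tendsto_measure_iUnion_atTop (μ := μ) hmono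
    rw [hun] at htend
    have htoReal := (ENNReal.tendsto_toReal (measure_ne_top μ _)).comp htend
    -- the sequence equals C (Phi x) (Phi n)
    have heq : ∀ n : ℕ, (μ (Set.Iic x ×ˢ Set.Iic (n : ℝ))).toReal = C (Phi x) (Phi n) :=
      fun n => hcdf x n
    -- C (Phi x) (Phi n) → Phi x by squeeze
    have hsq : Filter.Tendsto (fun n : ℕ => C (Phi x) (Phi (n : ℝ))) Filter.atTop (nhds (Phi x)) := by
      have hPhin : Filter.Tendsto (fun n : ℕ => Phi (n : ℝ)) Filter.atTop (nhds 1) :=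
        Phi_tendsto_atTop.comp tendsto_natCast_atTop_atTop
      have hlow : Filter.Tendsto (fun n : ℕ => Phi x - (1 - Phi (n : ℝ))) Filter.atTop (nhds (Phi x)) := by
        have := (tendsto_const_nhds (x := Phi x) (f := Filter.atTop (α := ℕ))).sub
          ((tendsto_const_nhds (x := (1:ℝ)) (f := Filter.atTop (α := ℕ))).sub hPhin)
        simpa using this
      refine tendsto_of_tendsto_of_tendsto_of_le_of_le hlow tendsto_const_nhds ?_ ?_
      · intro n
        exact (copula_bounds hC (Phi_nonneg x) (Phi_le_one x) (Phi_nonneg _) (Phi_le_one _)).1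
      · intro n
        exact (copula_bounds hC (Phi_nonneg x) (Phi_le_one x) (Phi_nonneg _) (Phi_le_one _)).2
    have : Filter.Tendsto (fun n : ℕ => (μ (Set.Iic x ×ˢ Set.Iic (n : ℝ))).toReal)
        Filter.atTop (nhds ((μ (Set.Iic x ×ˢ (univ : Set ℝ))).toReal)) := htoReal
    rw [Filter.tendsto_congr heq] at this
    exact tendsto_nhds_unique this hsq
  have hm2 : ∀ y : ℝ, (μ ((univ : Set ℝ) ×ˢ Set.Iic y)).toReal = Phi y := by
    intro y
    have hun : (⋃ n : ℕ, Set.Iic (n : ℝ) ×ˢ Set.Iic y) = (univ : Set ℝ) ×ˢ Set.Iic y := by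
      ext q
      simp only [mem_iUnion, mem_prod, mem_Iic, mem_univ, true_and]
      constructor
      · rintro ⟨n, -, h1⟩; exact h1
      · intro h; obtain ⟨n, hn⟩ := exists_nat_ge q.1; exact ⟨n, hn, h⟩
    have hmono : Monotone fun n : ℕ => Set.Iic (n : ℝ) ×ˢ Set.Iic y := by
      intro m n hmn
      exact prod_mono_left (Iic_subset_Iic.mpr (by exact_mod_cast hmn))
    have htend := tendsto_measure_iUnion_atTop (μ := μ) hmono
    rw [hun] at htend
    have htoReal := (ENNReal.tendsto_toReal (measure_ne_top μ _)).comp htend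
    have heq : ∀ n : ℕ, (μ (Set.Iic (n : ℝ) ×ˢ Set.Iic y)).toReal = C (Phi n) (Phi y) :=
      fun n => hcdf n y
    have hsq : Filter.Tendsto (fun n : ℕ => C (Phi (n : ℝ)) (Phi y)) Filter.atTop (nhds (Phi y)) := by
      have hPhin : Filter.Tendsto (fun n : ℕ => Phi (n : ℝ)) Filter.atTop (nhds 1) :=
        Phi_tendsto_atTop.comp tendsto_natCast_atTop_atTop
      have hlow : Filter.Tendsto (fun n : ℕ => Phi y - (1 - Phi (n : ℝ))) Filter.atTop (nhds (Phi y)) := by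
        have := (tendsto_const_nhds (x := Phi y) (f := Filter.atTop (α := ℕ))).sub
          ((tendsto_const_nhds (x := (1:ℝ)) (f := Filter.atTop (α := ℕ))).sub hPhin)
        simpa using this
      refine tendsto_of_tendsto_of_tendsto_of_le_of_le hlow tendsto_const_nhds ?_ ?_
      · intro n
        exact (copula_bounds2 hC (Phi_nonneg y) (Phi_le_one y) (Phi_nonneg _) (Phi_le_one _)).1
      · intro n
        exact (copula_bounds2 hC (Phi_nonneg y) (Phi_le_one y) (Phi_nonneg _) (Phi_le_one _)).2
    have : Filter.Tendsto (fun n : ℕ => (μ (Set.Iic (n : ℝ) ×ˢ Set.Iic y)).toReal)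
        Filter.atTop (nhds ((μ ((univ : Set ℝ) ×ˢ Set.Iic y)).toReal)) := htoReal
    rw [Filter.tendsto_congr heq] at this
    exact tendsto_nhds_unique this hsq
  -- main estimate
  have hsub : {q : ℝ × ℝ | η ≤ q.1 - q.2} ⊆
      {q : ℝ × ℝ | η/2 ≤ q.1} ∪ ((univ : Set ℝ) ×ˢ Set.Iic (-η/2)) := by
    intro q hq
    simp only [mem_setOf_eq] at hq
    by_cases h : η/2 ≤ q.1
    · exact Or.inl h
    · right
      push_neg at h
      simp only [mem_prod, mem_univ, mem_Iic, true_and]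
      linarith
  -- bound on upper tail of first marginal
  have htail : (μ {q : ℝ × ℝ | η/2 ≤ q.1}).toReal ≤ Phi (-η/2) := by
    have hbound : ∀ x : ℝ, x < η/2 → (μ {q : ℝ × ℝ | η/2 ≤ q.1}).toReal ≤ 1 - Phi x := by
      intro x hx
      have hsub2 : {q : ℝ × ℝ | η/2 ≤ q.1} ⊆ (Set.Iic x ×ˢ (univ : Set ℝ))ᶜ := by
        intro q hq hq2
        simp only [mem_setOf_eq] at hq
        simp only [mem_prod, mem_Iic, mem_univ, and_true] at hq2
        linarith
      have hcompl : (μ ((Set.Iic x ×ˢ (univ : Set ℝ))ᶜ)).toReal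
          = 1 - (μ (Set.Iic x ×ˢ (univ : Set ℝ))).toReal := by
        rw [measure_compl (measurableSet_Iic.prod MeasurableSet.univ) (measure_ne_top μ _)]
        rw [measure_univ, ENNReal.toReal_sub_of_le prob_le_one (by norm_num)]
        norm_num
      calc (μ {q : ℝ × ℝ | η/2 ≤ q.1}).toReal
          ≤ (μ ((Set.Iic x ×ˢ (univ : Set ℝ))ᶜ)).toReal :=
            ENNReal.toReal_mono (measure_ne_top μ _) (measure_mono hsub2)
        _ = 1 - Phi x := by rw [hcompl, hm1]
    have hlim : Filter.Tendsto (fun n : ℕ => 1 - Phi (η/2 - 1/(n+1))) Filter.atTop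
        (nhds (1 - Phi (η/2))) := by
      have h1 : Filter.Tendsto (fun n : ℕ => η/2 - 1/((n:ℝ)+1)) Filter.atTop (nhds (η/2)) := by
        have := tendsto_one_div_add_atTop_nhds_zero_nat (𝕜 := ℝ)
        have h2 := (tendsto_const_nhds (x := η/2) (f := Filter.atTop (α := ℕ))).sub this
        simpa using h2
      exact (tendsto_const_nhds.sub (Phi_continuous.continuousAt.tendsto.comp h1))
    have : (μ {q : ℝ × ℝ | η/2 ≤ q.1}).toReal ≤ 1 - Phi (η/2) := by
      refine le_of_tendsto_of_tendsto' tendsto_const_nhds hlim fun n => ?_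
      refine hbound _ ?_
      have : (0:ℝ) < 1/((n:ℝ)+1) := by positivity
      linarith
    have hsymm : Phi (-η/2) = 1 - Phi (η/2) := by
      rw [show (-η/2 : ℝ) = -(η/2) by ring, Phi_neg]
    linarith
    
  have h2nd : (μ ((univ : Set ℝ) ×ˢ Set.Iic (-η/2))).toReal = Phi (-η/2) := hm2 _
  calc (μ {q : ℝ × ℝ | η ≤ q.1 - q.2}).toReal
      ≤ (μ ({q : ℝ × ℝ | η/2 ≤ q.1} ∪ ((univ : Set ℝ) ×ˢ Set.Iic (-η/2)))).toReal :=
        ENNReal.toReal_mono (measure_ne_top μ _) (measure_mono hsub)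
    _ ≤ (μ {q : ℝ × ℝ | η/2 ≤ q.1}).toReal + (μ ((univ : Set ℝ) ×ˢ Set.Iic (-η/2))).toReal := by
        refine le_trans (ENNReal.toReal_mono ?_ (measure_union_le _ _)) ENNReal.toReal_add_le
        exact ENNReal.add_ne_top.mpr ⟨measure_ne_top μ _, measure_ne_top μ _⟩
    _ ≤ Phi (-η/2) + Phi (-η/2) := add_le_add htail (le_of_eq h2nd)
    _ = 2 * Phi (-η/2) := by ring
  

set_option maxHeartbeats 2000000 in
lemma isCopula_Cr {r : ℝ} (hr0 : 0 ≤ r) (hr1 : r ≤ 1) : IsCopula (Cr r) := by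
  constructor
  · intro u₁ u₂ v₁ v₂ hu₁ hu hu₂ hv₁ hv hv₂
    by_cases c1 : 1 - r ≤ u₁ <;> by_cases c2 : 1 - r ≤ u₂ <;>
      by_cases d1 : v₁ ≤ r <;> by_cases d2 : v₂ ≤ r <;>
      simp only [Cr, c1, c2, d1, d2, true_and, false_and, and_true, and_false,
        if_true, if_false, min_def, max_def] <;>
      split_ifs <;> linarith
  · intro u hu hu1
    refine ⟨?_, ?_, ?_, ?_⟩ <;>
      · simp only [Cr, min_def, max_def]
        split_ifs <;> linarith

noncomputable def gmap (r t : ℝ) : ℝ := if 1 - r ≤ t then t - 1 + r else 1 - t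

lemma measurable_gmap (r : ℝ) : Measurable (gmap r) := by
  unfold gmap
  exact Measurable.ite (measurableSet_le measurable_const measurable_id)
    ((measurable_id.sub measurable_const).add measurable_const)
    (measurable_const.sub measurable_id)

noncomputable def Tmap (r t : ℝ) : ℝ × ℝ := (PhiInv t, PhiInv (gmap r t))

lemma measurable_Tmap (r : ℝ) : Measurable (Tmap r) :=
  measurable_PhiInv.prodMk (measurable_PhiInv.comp (measurable_gmap r))

noncomputable def muC (r : ℝ) : Measure (ℝ × ℝ) := (volume.restrict (Ioo 0 1)).map (Tmap r)

lemma isProb_base : IsProbabilityMeasure (volume.restrict (Ioo (0:ℝ) 1)) :=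
  ⟨by rw [Measure.restrict_apply_univ, Real.volume_Ioo]; norm_num⟩

lemma isProb_muC (r : ℝ) : IsProbabilityMeasure (muC r) := by
  have := isProb_base
  exact Measure.isProbabilityMeasure_map (measurable_Tmap r).aemeasurable

lemma gmap_mem {r t : ℝ} (hr0 : 0 < r) (hr1 : r < 1) (ht : t ∈ Ioo (0:ℝ) 1)
    (hne : t ≠ 1 - r) : 0 < gmap r t ∧ gmap r t < 1 := by
  obtain ⟨ht0, ht1⟩ := ht
  unfold gmap
  split_ifs with h
  · have : 1 - r < t := lt_of_le_of_ne h (Ne.symm hne)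
    constructor <;> linarith
  · push_neg at h
    constructor <;> linarith

lemma mem_pre {r t x y : ℝ} (hr0 : 0 < r) (hr1 : r < 1) (ht : t ∈ Ioo (0:ℝ) 1)
    (hne : t ≠ 1 - r) :
    (PhiInv t ≤ x ∧ PhiInv (gmap r t) ≤ y) ↔ (t ≤ Phi x ∧ gmap r t ≤ Phi y) := by
  obtain ⟨hg0, hg1⟩ := gmap_mem hr0 hr1 ht hne
  rw [PhiInv_le_iff ht.1 ht.2, PhiInv_le_iff hg0 hg1]

lemma muC_cdf {r : ℝ} (hr0 : 0 < r) (hr1 : r < 1) (x y : ℝ) :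
    ((muC r) (Set.Iic x ×ˢ Set.Iic y)).toReal = Cr r (Phi x) (Phi y) := by
  have ha0 := Phi_pos x
  have ha1 := Phi_lt_one x
  have hb0 := Phi_pos y
  have hb1 := Phi_lt_one y
  set a := Phi x with ha
  set b := Phi y with hb
  rw [muC, Measure.map_apply (measurable_Tmap r) (measurableSet_Iic.prod measurableSet_Iic),
    Measure.restrict_apply' measurableSet_Ioo]
  have hpre : ∀ t : ℝ, t ∈ Tmap r ⁻¹' (Set.Iic x ×ˢ Set.Iic y) ↔
      (PhiInv t ≤ x ∧ PhiInv (gmap r t) ≤ y) := by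
    intro t; rfl
  by_cases hc : 1 - r ≤ a ∧ b ≤ r
  · -- corner case
    have hae : (Tmap r ⁻¹' (Set.Iic x ×ˢ Set.Iic y) ∩ Ioo 0 1 : Set ℝ)
        =ᵐ[volume] Icc (1-r) (min a (1-r+b)) := by
      rw [Filter.eventuallyEq_set, ae_iff]
      refine measure_mono_null ?_ (volume_singleton (a := 1-r))
      intro t hts
      simp only [mem_setOf_eq, mem_singleton_iff] at hts ⊢
      by_contra hne
      apply hts
      constructor
      · rintro ⟨hp, hIoo⟩
        rw [hpre t] at hp
        obtain ⟨h1, h2⟩ := (mem_pre hr0 hr1 hIoo hne).mp hp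
        have hge : 1 - r ≤ t := by
          by_contra hlt
          push_neg at hlt
          have hgm : gmap r t = 1 - t := by unfold gmap; rw [if_neg (not_le.mpr hlt)]
          rw [hgm] at h2
          linarith [hc.2]
        have hgm : gmap r t = t - 1 + r := by unfold gmap; rw [if_pos hge]
        rw [hgm] at h2
        exact ⟨hge, le_min h1 (by linarith)⟩
      · intro hIcc
        obtain ⟨hl, hu⟩ := hIcc
        have hIoo : t ∈ Ioo (0:ℝ) 1 :=
          ⟨by linarith, lt_of_le_of_lt (le_trans hu (min_le_left _ _)) ha1⟩
        have hgm : gmap r t = t - 1 + r := by unfold gmap; rw [if_pos hl]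
        refine ⟨(hpre t).mpr ((mem_pre hr0 hr1 hIoo hne).mpr ⟨le_trans hu (min_le_left _ _), ?_⟩), hIoo⟩
        rw [hgm]
        have := le_trans hu (min_le_right _ _)
        linarith
    rw [measure_congr hae, Real.volume_Icc, Cr, if_pos hc]
    have hmin : min a (1-r+b) - (1-r) = min (a-1+r) b := by
      rcases le_total a (1-r+b) with h | h
      · rw [min_eq_left h, min_eq_left (by linarith)]; ring
      · rw [min_eq_right h, min_eq_right (by linarith)]; ring
    rw [hmin, ENNReal.toReal_ofReal (le_min (by linarith [hc.1]) hb0.le)]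
  · -- non-corner case
    have hae : (Tmap r ⁻¹' (Set.Iic x ×ˢ Set.Iic y) ∩ Ioo 0 1 : Set ℝ)
        =ᵐ[volume] Icc (1-b) a := by
      rw [Filter.eventuallyEq_set, ae_iff]
      refine measure_mono_null ?_ (volume_singleton (a := 1-r))
      intro t hts
      simp only [mem_setOf_eq, mem_singleton_iff] at hts ⊢
      by_contra hne
      apply hts
      rcases not_and_or.mp hc with hc1 | hc2
      all_goals push_neg at *
      · -- a < 1 - r
        constructor
        · rintro ⟨hp, hIoo⟩
          rw [hpre t] at hp
          obtain ⟨h1, h2⟩ := (mem_pre hr0 hr1 hIoo hne).mp hp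
          have hlt : t < 1 - r := lt_of_le_of_lt h1 hc1
          have hgm : gmap r t = 1 - t := by unfold gmap; rw [if_neg (not_le.mpr hlt)]
          rw [hgm] at h2
          exact ⟨by linarith, h1⟩
        · rintro ⟨hl, hu⟩
          have hIoo : t ∈ Ioo (0:ℝ) 1 := ⟨by linarith, by linarith⟩
          have hlt : t < 1 - r := by linarith
          have hgm : gmap r t = 1 - t := by unfold gmap; rw [if_neg (not_le.mpr hlt)]
          exact ⟨(hpre t).mpr ((mem_pre hr0 hr1 hIoo hne).mpr ⟨hu, by rw [hgm]; linarith⟩), hIoo⟩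
      · -- r < b
        constructor
        · rintro ⟨hp, hIoo⟩
          rw [hpre t] at hp
          obtain ⟨h1, h2⟩ := (mem_pre hr0 hr1 hIoo hne).mp hp
          refine ⟨?_, h1⟩
          by_cases hge : 1 - r ≤ t
          · linarith
          · push_neg at hge
            have hgm : gmap r t = 1 - t := by unfold gmap; rw [if_neg (not_le.mpr hge)]
            rw [hgm] at h2; linarith
        · rintro ⟨hl, hu⟩
          have hIoo : t ∈ Ioo (0:ℝ) 1 := ⟨by linarith, by linarith⟩
          refine ⟨(hpre t).mpr ((mem_pre hr0 hr1 hIoo hne).mpr ⟨hu, ?_⟩), hIoo⟩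
          by_cases hge : 1 - r ≤ t
          · have hgm : gmap r t = t - 1 + r := by unfold gmap; rw [if_pos hge]
            rw [hgm]; linarith
          · push_neg at hge
            have hgm : gmap r t = 1 - t := by unfold gmap; rw [if_neg (not_le.mpr hge)]
            rw [hgm]; linarith
    rw [measure_congr hae, Real.volume_Icc, Cr, if_neg hc, ENNReal.toReal_ofReal']
    congr 1
    ring

lemma Phi_neg_half {η : ℝ} : Phi (-η/2) = 1 - Phi (η/2) := by
  rw [show (-η/2 : ℝ) = -(η/2) by ring, Phi_neg]

lemma muC_event {η : ℝ} (hη : 0 < η) :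
    ((muC (2 * Phi (-η/2))) {q : ℝ × ℝ | η ≤ q.1 - q.2}).toReal = 2 * Phi (-η/2) := by
  set r := 2 * Phi (-η/2) with hrdef
  have hr0 : 0 < r := by have := Phi_pos (-η/2); positivity
  have hr1 : r < 1 := by
    have h1 : Phi (-η/2) < Phi 0 := Phi_mono (by linarith)
    have h2 : Phi 0 = 1/2 := Phi_zero
    simp only [hrdef]; linarith
  have hmeas : MeasurableSet {q : ℝ × ℝ | η ≤ q.1 - q.2} :=
    measurableSet_le measurable_const (measurable_fst.sub measurable_snd)
  rw [muC, Measure.map_apply (measurable_Tmap r) hmeas,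
    Measure.restrict_apply' measurableSet_Ioo]
  have hae : (Tmap r ⁻¹' {q : ℝ × ℝ | η ≤ q.1 - q.2} ∩ Ioo 0 1 : Set ℝ)
      =ᵐ[volume] Ioo (1-r) 1 := by
    rw [Filter.eventuallyEq_set, ae_iff]
    refine measure_mono_null ?_ (volume_singleton (a := 1-r))
    intro t hts
    simp only [mem_setOf_eq, mem_singleton_iff] at hts ⊢
    by_contra hne
    apply hts
    constructor
    · rintro ⟨hp, hIoo⟩
      have hp' : η ≤ PhiInv t - PhiInv (gmap r t) := hp
      refine ⟨?_, hIoo.2⟩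
      by_contra hlt
      push_neg at hlt
      have hlt' : t < 1 - r := lt_of_le_of_ne hlt hne
      have hgm : gmap r t = 1 - t := by unfold gmap; rw [if_neg (not_le.mpr hlt')]
      rw [hgm, PhiInv_one_sub hIoo.1 hIoo.2] at hp'
      have hhalf : η/2 ≤ PhiInv t := by linarith
      have ht2 : Phi (η/2) ≤ t := (le_PhiInv_iff hIoo.1 hIoo.2).mp hhalf
      have := Phi_neg_half (η := η)
      simp only [hrdef] at hlt'
      linarith
    · rintro ⟨hl, hu⟩
      have hIoo : t ∈ Ioo (0:ℝ) 1 := ⟨by linarith, hu⟩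
      refine ⟨?_, hIoo⟩
      show η ≤ PhiInv t - PhiInv (gmap r t)
      have hgm : gmap r t = t - 1 + r := by unfold gmap; rw [if_pos (by linarith)]
      have hg01 : 0 < gmap r t ∧ gmap r t < 1 := gmap_mem hr0 hr1 hIoo hne
      refine diff_ge hη.le ?_
      rw [Phi_PhiInv hIoo.1 hIoo.2, Phi_PhiInv hg01.1 hg01.2, hgm]
      simp only [hrdef]
      linarith
  rw [measure_congr hae, Real.volume_Ioo, ENNReal.toReal_ofReal (by linarith)]
  simp only [hrdef]
  ring

/-- The supremum of `P(X - Y ≥ η)` over all copulae linking two standard normals is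
`2Φ(-η/2)`, attained by the patchwork copula `C^r` with `r = 2Φ(-η/2)`. -/
theorem stmt11 (η : ℝ) (hη : 0 < η) :
    (∀ (C : ℝ → ℝ → ℝ) (μ : Measure (ℝ × ℝ)), IsCopula C → IsProbabilityMeasure μ →
      (∀ x y : ℝ, (μ (Set.Iic x ×ˢ Set.Iic y)).toReal = C (Phi x) (Phi y)) →
      (μ {q : ℝ × ℝ | η ≤ q.1 - q.2}).toReal ≤ 2 * Phi (-η / 2)) ∧
    (IsCopula (Cr (2 * Phi (-η / 2))) ∧
      ∃ μ : Measure (ℝ × ℝ), IsProbabilityMeasure μ ∧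
        (∀ x y : ℝ,
          (μ (Set.Iic x ×ˢ Set.Iic y)).toReal = Cr (2 * Phi (-η / 2)) (Phi x) (Phi y)) ∧
        (μ {q : ℝ × ℝ | η ≤ q.1 - q.2}).toReal = 2 * Phi (-η / 2)) := by
  have hr0 : 0 < 2 * Phi (-η / 2) := by have := Phi_pos (-η/2); positivity
  have hr1 : 2 * Phi (-η / 2) < 1 := by
    have h1 : Phi (-η/2) < Phi 0 := Phi_mono (by linarith)
    linarith [Phi_zero]
  exact ⟨fun C μ hC hμ hcdf => part1 η hη C μ hC hμ hcdf,
    isCopula_Cr hr0.le hr1.le,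
    muC (2 * Phi (-η / 2)), isProb_muC _,
    fun x y => muC_cdf hr0 hr1 x y,
    muC_event hη⟩
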